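/- arXiv:2506.06706 — 7 statements merged into one kernel-verified Lean document; each statement's English description precedes it below -/
import Mathlib

section
/- Let (Ψ_j)_{j∈ℕ} be a sequence of measure-preserving bijections of 𝕋^d and let (ν^x)_{x∈𝕋^d} be a measurable family of probability measures on 𝕋^d such that for every continuous function ρ : 𝕋^d → ℝ the compositions ρ∘Ψ_j converge to ⟨ν^x, ρ⟩ weakly in L²(𝕋^d), i.e. for every f ∈ L²(𝕋^d) one has ∫ ρ(Ψ_j(x)) f(x) dμ(x) → ∫ ⟨ν^x, ρ⟩ f(x) dμ(x) as j → ∞. Then for every bounded measurable function ρ : 𝕋^d → ℝ, the compositions ρ∘Ψ_j converge to ⟨ν^x, ρ⟩ weakly in L²(𝕋^d). -/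
open MeasureTheory Filter Topology ProbabilityTheory
open scoped ENNReal NNReal

/-- The `d`-dimensional torus `ℝ^d/ℤ^d`, with its quotient metric and
Haar–Lebesgue probability measure (the product of Haar measures on `ℝ/ℤ`). -/
abbrev Torus (d : ℕ) := Fin d → AddCircle (1 : ℝ)

instance : IsProbabilityMeasure (volume : Measure (AddCircle (1:ℝ))) :=
  ⟨by rw [AddCircle.measure_univ]; norm_num⟩

namespace Stmt0Aux

variable {α : Type*} [MeasurableSpace α] {μ : Measure α}

omit [MeasurableSpace α] in
lemma norm_rpow_two_eq (w : α → ℝ) (x : α) : ‖w x‖ ^ (2:ℝ) = w x ^ 2 := by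
  rw [show (2:ℝ) = ((2:ℕ):ℝ) by norm_num, Real.rpow_natCast, Real.norm_eq_abs, sq_abs]

lemma cs_bound [IsFiniteMeasure μ] {u v : α → ℝ}
    (hu : MemLp u 2 μ) (hv : MemLp v 2 μ) :
    |∫ x, u x * v x ∂μ| ≤
      (∫ x, u x ^ 2 ∂μ) ^ (1/(2:ℝ)) * (∫ x, v x ^ 2 ∂μ) ^ (1/(2:ℝ)) := by
  have h2 : ENNReal.ofReal (2:ℝ) = 2 := by norm_num
  have key := integral_mul_norm_le_Lp_mul_Lq (μ := μ) (p := 2) (q := 2) (f := u) (g := v)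
    ⟨by norm_num, by norm_num, by norm_num⟩ (by rwa [h2]) (by rwa [h2])
  simp only [norm_rpow_two_eq] at key
  calc |∫ x, u x * v x ∂μ| ≤ ∫ x, ‖u x * v x‖ ∂μ := by
        simpa [Real.norm_eq_abs] using norm_integral_le_integral_norm (μ := μ) (fun x => u x * v x)
    _ = ∫ x, ‖u x‖ * ‖v x‖ ∂μ := by simp [norm_mul]
    _ ≤ _ := key

lemma lp_norm_eq (f : Lp ℝ 2 μ) :
    ‖f‖ = (∫ x, (f x) ^ 2 ∂μ) ^ (1/(2:ℝ)) := by
  have h := (Lp.memLp f).eLpNorm_eq_integral_rpow_norm two_ne_zero ENNReal.ofNat_ne_top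
  rw [Lp.norm_def, h, ENNReal.toReal_ofReal (by positivity)]
  simp only [ENNReal.toReal_ofNat, norm_rpow_two_eq, one_div]

lemma est [IsFiniteMeasure μ] {u : α → ℝ} (hu : MemLp u 2 μ) (f : Lp ℝ 2 μ) :
    |∫ x, u x * f x ∂μ| ≤ (∫ x, u x ^ 2 ∂μ) ^ (1/(2:ℝ)) * ‖f‖ := by
  rw [lp_norm_eq f]
  exact cs_bound hu (Lp.memLp f)

end Stmt0Aux


open Stmt0Aux in
/-- If `(Ψ j)` is a sequence of measure-preserving bijections of `𝕋^d`
(measurable with measurable inverse), `(ν x)` is a Markov kernel on `𝕋^d`, and for every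
continuous `ρ` the compositions `ρ ∘ Ψ j` converge to `x ↦ ⟨ν^x, ρ⟩` weakly in `L²`,
then the same weak-`L²` convergence holds for every bounded measurable `ρ`. -/
theorem stmt0 (d : ℕ) (hd : 2 ≤ d)
    (Ψ : ℕ → (Torus d ≃ᵐ Torus d))
    (hΨ : ∀ j, MeasurePreserving (Ψ j) (volume : Measure (Torus d)) volume)
    (ν : Kernel (Torus d) (Torus d)) [IsMarkovKernel ν]
    (hcont : ∀ ρ : C(Torus d, ℝ), ∀ f : Lp ℝ 2 (volume : Measure (Torus d)),
      Tendsto (fun j => ∫ x, ρ (Ψ j x) * f x ∂(volume : Measure (Torus d))) atTop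
        (𝓝 (∫ x, (∫ y, ρ y ∂(ν x)) * f x ∂(volume : Measure (Torus d)))))
    (ρ : Torus d → ℝ) (hρm : Measurable ρ) (C : ℝ) (hρb : ∀ x, |ρ x| ≤ C) :
    ∀ f : Lp ℝ 2 (volume : Measure (Torus d)),
      Tendsto (fun j => ∫ x, ρ (Ψ j x) * f x ∂(volume : Measure (Torus d))) atTop
        (𝓝 (∫ x, (∫ y, ρ y ∂(ν x)) * f x ∂(volume : Measure (Torus d)))) := by
  set μ : Measure (Torus d) := volume with hμdef
  intro f
  haveI : IsProbabilityMeasure μ := by infer_instance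
  set β : Measure (Torus d) := μ.bind ν with hβdef
  haveI hβfin : IsFiniteMeasure β := by
    constructor
    rw [hβdef, Measure.bind_apply MeasurableSet.univ ν.measurable.aemeasurable]
    simp
  set μ' : Measure (Torus d) := μ + β with hμ'def
  haveI : IsFiniteMeasure μ' := by infer_instance
  -- basic facts about bounded measurable functions
  have memB : ∀ (m : Measure (Torus d)) [IsFiniteMeasure m], ∀ (h : Torus d → ℝ) (M : ℝ),
      Measurable h → (∀ x, |h x| ≤ M) → MemLp h 2 m := by
    intro m _ h M hm hb
    exact MemLp.of_bound hm.aestronglyMeasurable M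
      (Eventually.of_forall fun x => by simpa [Real.norm_eq_abs] using hb x)
  have kmeas : ∀ (h : Torus d → ℝ), Measurable h →
      StronglyMeasurable (fun x => ∫ y, h y ∂ν x) := by
    intro h hm
    exact MeasureTheory.StronglyMeasurable.integral_kernel_prod_right
      (κ := ν) (f := fun _ y => h y) ((hm.comp measurable_snd).stronglyMeasurable)
  have kbound : ∀ (h : Torus d → ℝ) (M : ℝ), Measurable h → (∀ x, |h x| ≤ M) →
      ∀ x, |∫ y, h y ∂ν x| ≤ M := by
    intro h M hm hb x
    calc |∫ y, h y ∂ν x| ≤ ∫ y, |h y| ∂ν x := by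
          simpa [Real.norm_eq_abs] using norm_integral_le_integral_norm (μ := ν x) h
      _ ≤ ∫ y, M ∂ν x := by
          refine integral_mono_of_nonneg (Eventually.of_forall fun y => abs_nonneg _)
            (integrable_const M) (Eventually.of_forall fun y => hb y)
      _ = M := by simp
  have sqb : ∀ (h : Torus d → ℝ) (M : ℝ), (∀ x, |h x| ≤ M) → ∀ x, |h x ^ 2| ≤ M ^ 2 := by
    intro h M hb x
    have := hb x
    have h0 : |h x ^ 2| = |h x| ^ 2 := by rw [abs_pow]
    rw [h0]
    exact pow_le_pow_left₀ (abs_nonneg _) this 2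
  -- claim 1 : Ψ-side L² bound
  have claim1 : ∀ (h : Torus d → ℝ) (M : ℝ), Measurable h → (∀ x, |h x| ≤ M) → ∀ j,
      ∫ x, h (Ψ j x) ^ 2 ∂μ ≤ ∫ x, h x ^ 2 ∂μ' := by
    intro h M hm hb j
    have e : ∫ x, h (Ψ j x) ^ 2 ∂μ = ∫ x, h x ^ 2 ∂μ :=
      (hΨ j).integral_comp (Ψ j).measurableEmbedding (fun y => h y ^ 2)
    rw [e, hμ'def]
    refine integral_mono_measure (Measure.le_add_right le_rfl)
      (Eventually.of_forall fun x => sq_nonneg _) ?_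
    exact ((memB μ' _ (M^2) (hm.pow_const 2) (sqb h M hb)).integrable one_le_two)
  -- claim 2 : ν-side L² bound
  have claim2 : ∀ (h : Torus d → ℝ) (M : ℝ), Measurable h → (∀ x, |h x| ≤ M) →
      ∫ x, (∫ y, h y ∂ν x) ^ 2 ∂μ ≤ ∫ x, h x ^ 2 ∂μ' := by
    intro h M hm hb
    have hsq_m : Measurable fun y => h y ^ 2 := hm.pow_const 2
    have pt : ∀ x, (∫ y, h y ∂ν x) ^ 2 ≤ ∫ y, h y ^ 2 ∂ν x := by
      intro x
      have hm2 : MemLp h 2 (ν x) := memB (ν x) h M hm hb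
      have hv := variance_nonneg h (ν x)
      rw [variance_eq_sub hm2] at hv
      have e1 : (ν x)[h ^ 2] = ∫ y, h y ^ 2 ∂ν x := by
        refine integral_congr_ae (Eventually.of_forall fun y => ?_)
        simp [Pi.pow_apply]
      rw [e1] at hv
      linarith
    have I1 : Integrable (fun x => (∫ y, h y ∂ν x) ^ 2) μ := by
      refine (memB μ _ (M^2) ((kmeas h hm).measurable.pow_const 2) ?_).integrable one_le_two
      exact sqb _ M (kbound h M hm hb)
    have I2 : Integrable (fun x => ∫ y, h y ^ 2 ∂ν x) μ := by
      refine (memB μ _ (M^2) (kmeas _ hsq_m).measurable ?_).integrable one_le_two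
      exact kbound _ (M^2) hsq_m (sqb h M hb)
    have intsq : ∀ x, Integrable (fun y => h y ^ 2) (ν x) := fun x =>
      (memB (ν x) _ (M^2) hsq_m (sqb h M hb)).integrable one_le_two
    calc ∫ x, (∫ y, h y ∂ν x) ^ 2 ∂μ ≤ ∫ x, (∫ y, h y ^ 2 ∂ν x) ∂μ :=
        integral_mono I1 I2 pt
      _ = ∫ y, h y ^ 2 ∂β := by
          rw [integral_eq_lintegral_of_nonneg_ae
              (Eventually.of_forall fun x => integral_nonneg fun y => sq_nonneg _)
              (kmeas _ hsq_m).aestronglyMeasurable,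
            integral_eq_lintegral_of_nonneg_ae
              (Eventually.of_forall fun y => sq_nonneg _)
              hsq_m.aestronglyMeasurable]
          congr 1
          rw [hβdef, Measure.lintegral_bind ν.measurable.aemeasurable hsq_m.ennreal_ofReal.aemeasurable]
          refine lintegral_congr fun x => ?_
          rw [ofReal_integral_eq_lintegral_ofReal (intsq x)
            (Eventually.of_forall fun y => sq_nonneg _)]
      _ ≤ ∫ y, h y ^ 2 ∂μ' := by
          rw [hμ'def]
          refine integral_mono_measure (Measure.le_add_left le_rfl)
            (Eventually.of_forall fun x => sq_nonneg _) ?_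
          exact (memB μ' _ (M^2) hsq_m (sqb h M hb)).integrable one_le_two
  -- integrability of products with f
  have hfInt : Integrable (⇑f) μ := (Lp.memLp f).integrable one_le_two
  have prodInt : ∀ (u : Torus d → ℝ) (M : ℝ), AEStronglyMeasurable u μ → (∀ x, |u x| ≤ M) →
      Integrable (fun x => u x * f x) μ := by
    intro u M hu hb
    exact hfInt.bdd_mul hu (Eventually.of_forall fun x => by simpa [Real.norm_eq_abs] using hb x)
  -- start the ε-argument
  rw [Metric.tendsto_atTop]
  intro ε hε
  set K : ℝ := ‖f‖ + 1 with hK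
  have hK0 : 0 < K := by positivity
  set δ : ℝ := ε / (3 * K) with hδ
  have hδ0 : 0 < δ := by positivity
  have hδK : δ * K = ε / 3 := by
    rw [hδ]; field_simp
  -- choose a continuous approximation g of ρ in L²(μ')
  haveI : Fact ((1:ℝ≥0∞) ≤ (2:ℝ≥0∞)) := ⟨one_le_two⟩
  have hρmem : MemLp ρ 2 μ' := memB μ' ρ C hρm hρb
  set X : Lp ℝ 2 μ' := hρmem.toLp ρ with hX
  have hdr : DenseRange (ContinuousMap.toLp (E := ℝ) 2 μ' ℝ) :=
    ContinuousMap.toLp_denseRange (α := Torus d) (E := ℝ) (μ := μ') ℝ (by norm_num)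
  obtain ⟨g, hgX⟩ := hdr.exists_dist_lt X hδ0
  -- bounds for `ρ - g`
  have hgb : ∀ x, |g x| ≤ ‖g‖ := fun x => by
    simpa [Real.norm_eq_abs] using g.norm_coe_le_norm x
  set M : ℝ := C + ‖g‖ with hM
  have hhm : Measurable (fun x => ρ x - g x) := hρm.sub g.continuous.measurable
  have hhb : ∀ x, |ρ x - g x| ≤ M := by
    intro x
    calc |ρ x - g x| ≤ |ρ x| + |g x| := by
          have := abs_add_le (ρ x) (-(g x)); simpa [sub_eq_add_neg] using this
      _ ≤ C + ‖g‖ := add_le_add (hρb x) (hgb x)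
  -- smallness of `ρ - g` in L²(μ')
  have hS : (∫ x, (ρ x - g x) ^ 2 ∂μ') ^ (1/(2:ℝ)) < δ := by
    have hmem' : MemLp (fun x => ρ x - g x) 2 μ' := memB μ' _ M hhm hhb
    have e0 : (X - ContinuousMap.toLp (E := ℝ) 2 μ' ℝ g : Lp ℝ 2 μ') =ᵐ[μ']
        fun x => ρ x - g x := by
      filter_upwards [Lp.coeFn_sub X (ContinuousMap.toLp (E := ℝ) 2 μ' ℝ g),
        hρmem.coeFn_toLp, ContinuousMap.coeFn_toLp (p := 2) (μ := μ') (𝕜 := ℝ) g] with x h1 h2 h3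
      rw [h1, Pi.sub_apply, h2, h3]
    have e1 : dist X (ContinuousMap.toLp (E := ℝ) 2 μ' ℝ g) =
        (∫ x, (ρ x - g x) ^ 2 ∂μ') ^ (1/(2:ℝ)) := by
      rw [dist_eq_norm, Lp.norm_def, eLpNorm_congr_ae e0,
        hmem'.eLpNorm_eq_integral_rpow_norm two_ne_zero ENNReal.ofNat_ne_top,
        ENNReal.toReal_ofReal (by positivity)]
      simp only [ENNReal.toReal_ofNat, norm_rpow_two_eq, one_div]
    rw [← e1]; exact hgX
  have hsqnn : (0:ℝ) ≤ ∫ x, (ρ x - g x) ^ 2 ∂μ' := integral_nonneg fun x => sq_nonneg _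
  -- middle term convergence
  have hmid := hcont g f
  rw [Metric.tendsto_atTop] at hmid
  obtain ⟨N, hN⟩ := hmid (ε/3) (by positivity)
  refine ⟨N, fun j hj => ?_⟩
  -- linearity identities
  have hintρΨ : Integrable (fun x => ρ (Ψ j x) * f x) μ :=
    prodInt _ C (hρm.comp (Ψ j).measurable).aestronglyMeasurable (fun x => hρb _)
  have hintgΨ : Integrable (fun x => g (Ψ j x) * f x) μ :=
    prodInt _ ‖g‖ (g.continuous.measurable.comp (Ψ j).measurable).aestronglyMeasurable
      (fun x => hgb _)
  have hintρν : Integrable (fun x => (∫ y, ρ y ∂ν x) * f x) μ :=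
    prodInt _ C (kmeas ρ hρm).aestronglyMeasurable (kbound ρ C hρm hρb)
  have hintgν : Integrable (fun x => (∫ y, g y ∂ν x) * f x) μ :=
    prodInt _ ‖g‖ (kmeas g g.continuous.measurable).aestronglyMeasurable
      (kbound g ‖g‖ g.continuous.measurable hgb)
  have Asub : ∫ x, ρ (Ψ j x) * f x ∂μ - ∫ x, g (Ψ j x) * f x ∂μ =
      ∫ x, (ρ (Ψ j x) - g (Ψ j x)) * f x ∂μ := by
    rw [← integral_sub hintρΨ hintgΨ]
    exact integral_congr_ae (Eventually.of_forall fun x => (sub_mul _ _ _).symm)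
  have Bsub : ∫ x, (∫ y, ρ y ∂ν x) * f x ∂μ - ∫ x, (∫ y, g y ∂ν x) * f x ∂μ =
      ∫ x, (∫ y, (ρ y - g y) ∂ν x) * f x ∂μ := by
    rw [← integral_sub hintρν hintgν]
    refine integral_congr_ae (Eventually.of_forall fun x => ?_)
    have e : (∫ y, (ρ y - g y) ∂ν x) = (∫ y, ρ y ∂ν x) - ∫ y, g y ∂ν x :=
      integral_sub ((memB (ν x) ρ C hρm hρb).integrable one_le_two)
        ((memB (ν x) g ‖g‖ g.continuous.measurable hgb).integrable one_le_two)
    simp only [e, sub_mul]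
  -- the three estimates
  have t1 : |∫ x, (ρ (Ψ j x) - g (Ψ j x)) * f x ∂μ| ≤ ε / 3 := by
    have hu : MemLp (fun x => ρ (Ψ j x) - g (Ψ j x)) 2 μ :=
      memB μ _ M (hhm.comp (Ψ j).measurable) (fun x => hhb _)
    calc |∫ x, (ρ (Ψ j x) - g (Ψ j x)) * f x ∂μ|
        ≤ (∫ x, (ρ (Ψ j x) - g (Ψ j x)) ^ 2 ∂μ) ^ (1/(2:ℝ)) * ‖f‖ := est hu f
      _ ≤ (∫ x, (ρ x - g x) ^ 2 ∂μ') ^ (1/(2:ℝ)) * ‖f‖ := by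
          refine mul_le_mul_of_nonneg_right ?_ (norm_nonneg f)
          exact Real.rpow_le_rpow (integral_nonneg fun x => sq_nonneg _)
            (claim1 _ M hhm hhb j) (by norm_num)
      _ ≤ δ * K := by
          refine mul_le_mul hS.le ?_ (norm_nonneg f) hδ0.le
          rw [hK]; linarith
      _ = ε / 3 := hδK
  have t3 : |∫ x, (∫ y, (ρ y - g y) ∂ν x) * f x ∂μ| ≤ ε / 3 := by
    have hu : MemLp (fun x => ∫ y, (ρ y - g y) ∂ν x) 2 μ :=
      memB μ _ M (kmeas _ hhm).measurable (kbound _ M hhm hhb)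
    calc |∫ x, (∫ y, (ρ y - g y) ∂ν x) * f x ∂μ|
        ≤ (∫ x, (∫ y, (ρ y - g y) ∂ν x) ^ 2 ∂μ) ^ (1/(2:ℝ)) * ‖f‖ := est hu f
      _ ≤ (∫ x, (ρ x - g x) ^ 2 ∂μ') ^ (1/(2:ℝ)) * ‖f‖ := by
          refine mul_le_mul_of_nonneg_right ?_ (norm_nonneg f)
          exact Real.rpow_le_rpow (integral_nonneg fun x => sq_nonneg _)
            (claim2 _ M hhm hhb) (by norm_num)
      _ ≤ δ * K := by
          refine mul_le_mul hS.le ?_ (norm_nonneg f) hδ0.le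
          rw [hK]; linarith
      _ = ε / 3 := hδK
  have t2 : |(∫ x, g (Ψ j x) * f x ∂μ) - ∫ x, (∫ y, g y ∂ν x) * f x ∂μ| < ε / 3 := by
    have := hN j hj
    rwa [Real.dist_eq] at this
  rw [Real.dist_eq]
  have tri : |(∫ x, ρ (Ψ j x) * f x ∂μ) - ∫ x, (∫ y, ρ y ∂ν x) * f x ∂μ| ≤
      |(∫ x, ρ (Ψ j x) * f x ∂μ) - ∫ x, g (Ψ j x) * f x ∂μ| +
      |(∫ x, g (Ψ j x) * f x ∂μ) - ∫ x, (∫ y, g y ∂ν x) * f x ∂μ| +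
      |(∫ x, (∫ y, g y ∂ν x) * f x ∂μ) - ∫ x, (∫ y, ρ y ∂ν x) * f x ∂μ| := by
    have h1 := abs_sub_le (∫ x, ρ (Ψ j x) * f x ∂μ) (∫ x, g (Ψ j x) * f x ∂μ)
      (∫ x, (∫ y, ρ y ∂ν x) * f x ∂μ)
    have h2 := abs_sub_le (∫ x, g (Ψ j x) * f x ∂μ) (∫ x, (∫ y, g y ∂ν x) * f x ∂μ)
      (∫ x, (∫ y, ρ y ∂ν x) * f x ∂μ)
    linarith
  have e3 : |(∫ x, (∫ y, g y ∂ν x) * f x ∂μ) - ∫ x, (∫ y, ρ y ∂ν x) * f x ∂μ| =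
      |∫ x, (∫ y, (ρ y - g y) ∂ν x) * f x ∂μ| := by
    rw [abs_sub_comm, Bsub]
  have e1 : |(∫ x, ρ (Ψ j x) * f x ∂μ) - ∫ x, g (Ψ j x) * f x ∂μ| =
      |∫ x, (ρ (Ψ j x) - g (Ψ j x)) * f x ∂μ| := by rw [Asub]
  rw [e1, e3] at tri
  calc |(∫ x, ρ (Ψ j x) * f x ∂μ) - ∫ x, (∫ y, ρ y ∂ν x) * f x ∂μ| ≤ _ := tri
    _ < ε := by linarith
end

section
/- Let (Φ_t)_{t≥0} be a family of measure-preserving bijections of 𝕋^d and let ρ : 𝕋^d → ℝ be bounded measurable. Suppose the trajectory {ρ∘Φ_t^{-1}}_{t≥0} is precompact in L²(𝕋^d). Then for every sequence t_j → ∞ and every measurable family of probability measures (ν^x)_{x∈𝕋^d} such that (Φ_{t_j}^{-1})_j generates (ν^x) in the Young-measure sense on bounded measurable data, one has ρ(y) = ⟨ν^x, ρ⟩ for μ-almost every x ∈ 𝕋^d and ν^x-almost every y ∈ 𝕋^d. -/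
open MeasureTheory Filter Topology ProbabilityTheory

/-- The trajectory `{ρ ∘ Φ_t⁻¹ : t ≥ 0}`, regarded as the set of elements of
`L²(𝕋^d)` whose representative agrees a.e. with `ρ ∘ (Φ t).symm` for some `t ≥ 0`. -/
def trajectory {d : ℕ} (Φ : ℝ → (Torus d ≃ᵐ Torus d)) (ρ : Torus d → ℝ) :
    Set (Lp ℝ 2 (volume : Measure (Torus d))) :=
  {g | ∃ t : ℝ, 0 ≤ t ∧ (g : Torus d → ℝ) =ᵐ[volume] ρ ∘ (Φ t).symm}

/-- A sequence of measurable maps `Ψ j` of `𝕋^d` generates the Markov kernel `ν`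
in the Young-measure sense on bounded measurable data: for every bounded measurable
`ρ` and every `f ∈ L²`, `∫ ρ(Ψ_j x) f(x) dμ → ∫ ⟨ν^x, ρ⟩ f(x) dμ`. -/
def YoungGenerates {d : ℕ} (Ψ : ℕ → Torus d → Torus d)
    (ν : Kernel (Torus d) (Torus d)) : Prop :=
  ∀ ρ : Torus d → ℝ, Measurable ρ → (∃ C : ℝ, ∀ x, |ρ x| ≤ C) →
    ∀ f : Lp ℝ 2 (volume : Measure (Torus d)),
      Tendsto (fun j => ∫ x, ρ (Ψ j x) * f x ∂(volume : Measure (Torus d))) atTop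
        (𝓝 (∫ x, (∫ y, ρ y ∂(ν x)) * f x ∂(volume : Measure (Torus d))))

instance inst_s4 : IsProbabilityMeasure (volume : Measure (AddCircle (1:ℝ))) :=
  ⟨by rw [AddCircle.measure_univ]; norm_num⟩

/-- Two `L²` functions with the same pairings against every `L²` element agree a.e. -/
lemma eq_ae_of_pairings {α : Type*} [MeasurableSpace α] {μ : Measure α}
    {h1 h2 : α → ℝ} (m1 : MemLp h1 2 μ) (m2 : MemLp h2 2 μ)
    (H : ∀ f : Lp ℝ 2 μ, ∫ x, h1 x * f x ∂μ = ∫ x, h2 x * f x ∂μ) :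
    h1 =ᵐ[μ] h2 := by
  have hmul : ∀ {u v : α → ℝ}, MemLp u 2 μ → MemLp v 2 μ →
      Integrable (fun x => u x * v x) μ := by
    intro u v hu hv
    have h12 : (1 : ENNReal) / 1 = 1 / 2 + 1 / 2 := by
      have h2 : (1 : ENNReal) + 1 = 2 := one_add_one_eq_two
      rw [ENNReal.div_add_div_same, h2, one_div_one,
        ENNReal.div_self (by norm_num) (by norm_num)]
    have := (hv.smul hu : MemLp (u • v) 1 μ)
    rw [memLp_one_iff_integrable] at this
    exact (by simpa [Pi.smul_apply, smul_eq_mul] using this : Integrable (u * v) μ)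
  set F : Lp ℝ 2 μ := m1.toLp h1 - m2.toLp h2 with hFdef
  have hFcoe : (F : α → ℝ) =ᵐ[μ] fun x => h1 x - h2 x := by
    filter_upwards [Lp.coeFn_sub (m1.toLp h1) (m2.toLp h2), m1.coeFn_toLp, m2.coeFn_toLp]
      with x hx h1x h2x
    show (↑(m1.toLp h1 - m2.toLp h2) : α → ℝ) x = h1 x - h2 x
    rw [hx, Pi.sub_apply, h1x, h2x]
  have hsubmem : MemLp (fun x => h1 x - h2 x) 2 μ := m1.sub m2
  have e1 : ∫ x, (h1 x - h2 x) * F x ∂μ = 0 := by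
    have hi1 : Integrable (fun x => h1 x * F x) μ := hmul m1 (Lp.memLp F)
    have hi2 : Integrable (fun x => h2 x * F x) μ := hmul m2 (Lp.memLp F)
    have : ∫ x, (h1 x - h2 x) * F x ∂μ
        = ∫ x, h1 x * F x ∂μ - ∫ x, h2 x * F x ∂μ := by
      rw [← integral_sub hi1 hi2]
      congr 1; ext x; ring
    rw [this, H F, sub_self]
  have e2 : ∫ x, (h1 x - h2 x) * (h1 x - h2 x) ∂μ = 0 := by
    rw [← e1]
    refine integral_congr_ae ?_
    filter_upwards [hFcoe] with x hx
    rw [hx]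
  have hint : Integrable (fun x => (h1 x - h2 x) * (h1 x - h2 x)) μ :=
    hmul hsubmem hsubmem
  have hz := (integral_eq_zero_iff_of_nonneg (fun x => mul_self_nonneg _) hint).mp e2
  filter_upwards [hz] with x hx
  have hx' : (h1 x - h2 x) * (h1 x - h2 x) = 0 := hx
  have := mul_self_eq_zero.mp hx'
  linarith

set_option synthInstance.maxHeartbeats 1000000 in
/-- Let `(Φ t)_{t ≥ 0}` be measure-preserving bijections of `𝕋^d`
and `ρ` bounded measurable. If the trajectory `{ρ ∘ Φ_t⁻¹}_{t ≥ 0}` is precompact in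
`L²`, then for every sequence `t_j → ∞` and every Markov kernel `ν` generated by
`(Φ_{t_j}⁻¹)_j` in the Young-measure sense on bounded measurable data, one has
`ρ(y) = ⟨ν^x, ρ⟩` for `μ`-a.e. `x` and `ν^x`-a.e. `y`. -/
theorem stmt4 (d : ℕ) (hd : 2 ≤ d)
    (Φ : ℝ → (Torus d ≃ᵐ Torus d))
    (hΦ : ∀ t : ℝ, 0 ≤ t → MeasurePreserving (Φ t) (volume : Measure (Torus d)) volume)
    (ρ : Torus d → ℝ) (hρm : Measurable ρ) (C : ℝ) (hρb : ∀ x, |ρ x| ≤ C)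
    (hcpt : IsCompact (closure (trajectory Φ ρ))) :
    ∀ t : ℕ → ℝ, (∀ j, 0 ≤ t j) → Tendsto t atTop atTop →
      ∀ ν : Kernel (Torus d) (Torus d), IsMarkovKernel ν →
        YoungGenerates (fun j => (Φ (t j)).symm) ν →
          ∀ᵐ x ∂(volume : Measure (Torus d)), ∀ᵐ y ∂(ν x), ρ y = ∫ z, ρ z ∂(ν x) := by
  intro t ht htop ν hνM hY
  set μ := (volume : Measure (Torus d)) with hμdef
  have hC0 : 0 ≤ C := le_trans (abs_nonneg _) (hρb fun _ => 0)
  have hmeas : ∀ j : ℕ, Measurable fun x => ρ ((Φ (t j)).symm x) :=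
    fun j => hρm.comp (Φ (t j)).symm.measurable
  have hmem : ∀ j, MemLp (fun x => ρ ((Φ (t j)).symm x)) 2 μ := fun j =>
    MemLp.of_bound (hmeas j).aestronglyMeasurable C
      (Eventually.of_forall fun x => by simpa [Real.norm_eq_abs] using hρb _)
  set G : ℕ → Lp ℝ 2 μ := fun j => (hmem j).toLp _ with hGdef
  have hGtraj : ∀ j, G j ∈ trajectory Φ ρ := fun j => ⟨t j, ht j, (hmem j).coeFn_toLp⟩
  obtain ⟨g, -, φ, hφmono, hφlim⟩ :=
    hcpt.tendsto_subseq fun j => subset_closure (hGtraj j)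
  have hInM : TendstoInMeasure μ (fun k => ((G ∘ φ) k : Torus d → ℝ)) atTop g :=
    tendstoInMeasure_of_tendsto_Lp hφlim
  obtain ⟨ns, hnsmono, hns⟩ := hInM.exists_seq_tendsto_ae
  set ψ : ℕ → ℕ := fun k => φ (ns k) with hψdef
  have hψmono : StrictMono ψ := hφmono.comp hnsmono
  have hae : ∀ᵐ x ∂μ, Tendsto (fun k => ρ ((Φ (t (ψ k))).symm x)) atTop (𝓝 (g x)) := by
    have hcoe : ∀ k : ℕ, (G (ψ k) : Torus d → ℝ) =ᵐ[μ]
        fun x => ρ ((Φ (t (ψ k))).symm x) := fun k => (hmem (ψ k)).coeFn_toLp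
    filter_upwards [hns, ae_all_iff.mpr hcoe] with x hx hx2
    exact hx.congr fun k => hx2 k
  have hgbd : ∀ᵐ x ∂μ, |g x| ≤ C := by
    filter_upwards [hae] with x hx
    exact le_of_tendsto hx.abs (Eventually.of_forall fun k => hρb _)
  have hgmem : MemLp (g : Torus d → ℝ) 2 μ := Lp.memLp g
  -- the barycenters
  set B : Torus d → ℝ := fun x => ∫ y, ρ y ∂ν x with hBdef
  set B2 : Torus d → ℝ := fun x => ∫ y, ρ y * ρ y ∂ν x with hB2def
  have hρ2m : Measurable fun y => ρ y * ρ y := hρm.mul hρm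
  have hρ2b : ∀ y, |ρ y * ρ y| ≤ C * C := fun y => by
    rw [abs_mul]
    exact mul_le_mul (hρb y) (hρb y) (abs_nonneg _) hC0
  have hρint : ∀ x, Integrable ρ (ν x) := fun x =>
    Integrable.mono' (integrable_const C) hρm.aestronglyMeasurable
      (Eventually.of_forall fun y => by simpa [Real.norm_eq_abs] using hρb y)
  have hρ2int : ∀ x, Integrable (fun y => ρ y * ρ y) (ν x) := fun x =>
    Integrable.mono' (integrable_const (C * C)) hρ2m.aestronglyMeasurable
      (Eventually.of_forall fun y => by simpa [Real.norm_eq_abs] using hρ2b y)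
  have hBsm : StronglyMeasurable B :=
    (hρm.comp measurable_snd).stronglyMeasurable.integral_kernel_prod_right' (κ := ν)
  have hB2sm : StronglyMeasurable B2 :=
    (hρ2m.comp measurable_snd).stronglyMeasurable.integral_kernel_prod_right' (κ := ν)
  have hBbd : ∀ x, ‖B x‖ ≤ C := fun x => by
    have := norm_integral_le_of_norm_le_const
      (μ := ν x) (f := ρ) (C := C)
      (Eventually.of_forall fun y => by simpa [Real.norm_eq_abs] using hρb y)
    simpa using this
  have hB2bd : ∀ x, ‖B2 x‖ ≤ C * C := fun x => by
    have := norm_integral_le_of_norm_le_const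
      (μ := ν x) (f := fun y => ρ y * ρ y) (C := C * C)
      (Eventually.of_forall fun y => by simpa [Real.norm_eq_abs] using hρ2b y)
    simpa using this
  have hBmem : MemLp B 2 μ :=
    MemLp.of_bound hBsm.aestronglyMeasurable C (Eventually.of_forall hBbd)
  have hB2mem : MemLp B2 2 μ :=
    MemLp.of_bound hB2sm.aestronglyMeasurable (C * C) (Eventually.of_forall hB2bd)
  -- dominated convergence along the sub-subsequence against any f ∈ L²
  have hfint : ∀ f : Lp ℝ 2 μ, Integrable (f : Torus d → ℝ) μ :=
    fun f => (Lp.memLp f).integrable one_le_two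
  have hDCT : ∀ (f : Lp ℝ 2 μ),
      Tendsto (fun k => ∫ x, ρ ((Φ (t (ψ k))).symm x) * f x ∂μ) atTop
        (𝓝 (∫ x, g x * f x ∂μ)) := by
    intro f
    refine tendsto_integral_of_dominated_convergence (fun x => C * |f x|)
      (fun k => ((hmeas (ψ k)).aestronglyMeasurable.mul (Lp.aestronglyMeasurable f)))
      (((hfint f).abs).const_mul C) (fun k => Eventually.of_forall fun x => ?_) ?_
    · rw [Real.norm_eq_abs, abs_mul]
      exact mul_le_mul_of_nonneg_right (hρb _) (abs_nonneg _)
    · filter_upwards [hae] with x hx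
      exact hx.mul tendsto_const_nhds
  have hDCT2 : ∀ (f : Lp ℝ 2 μ),
      Tendsto (fun k => ∫ x, (ρ ((Φ (t (ψ k))).symm x) * ρ ((Φ (t (ψ k))).symm x)) * f x ∂μ)
        atTop (𝓝 (∫ x, (g x * g x) * f x ∂μ)) := by
    intro f
    refine tendsto_integral_of_dominated_convergence (fun x => (C * C) * |f x|)
      (fun k => (((hmeas (ψ k)).mul (hmeas (ψ k))).aestronglyMeasurable.mul
        (Lp.aestronglyMeasurable f)))
      (((hfint f).abs).const_mul (C * C)) (fun k => Eventually.of_forall fun x => ?_) ?_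
    · rw [Real.norm_eq_abs, abs_mul]
      exact mul_le_mul_of_nonneg_right (hρ2b _) (abs_nonneg _)
    · filter_upwards [hae] with x hx
      exact (hx.mul hx).mul tendsto_const_nhds
  -- identify weak limits
  have hBg : B =ᵐ[μ] (g : Torus d → ℝ) := by
    refine eq_ae_of_pairings hBmem hgmem fun f => ?_
    have h1 : Tendsto (fun k => ∫ x, ρ ((Φ (t (ψ k))).symm x) * f x ∂μ) atTop
        (𝓝 (∫ x, B x * f x ∂μ)) := (hY ρ hρm ⟨C, hρb⟩ f).comp hψmono.tendsto_atTop
    exact tendsto_nhds_unique h1 (hDCT f)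
  have hB2g : B2 =ᵐ[μ] fun x => g x * g x := by
    have hgg : MemLp (fun x => (g : Torus d → ℝ) x * g x) 2 μ :=
      MemLp.of_bound ((Lp.aestronglyMeasurable g).mul (Lp.aestronglyMeasurable g)) (C * C)
        (by filter_upwards [hgbd] with x hx
            rw [Real.norm_eq_abs, abs_mul]
            exact mul_le_mul hx hx (abs_nonneg _) hC0)
    refine eq_ae_of_pairings hB2mem hgg fun f => ?_
    have h1 : Tendsto
        (fun k => ∫ x, (ρ ((Φ (t (ψ k))).symm x) * ρ ((Φ (t (ψ k))).symm x)) * f x ∂μ) atTop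
        (𝓝 (∫ x, B2 x * f x ∂μ)) :=
      (hY (fun y => ρ y * ρ y) hρ2m ⟨C * C, hρ2b⟩ f).comp hψmono.tendsto_atTop
    exact tendsto_nhds_unique h1 (hDCT2 f)
  have hfinal : ∀ᵐ x ∂μ, B2 x = B x * B x := by
    filter_upwards [hBg, hB2g] with x h1 h2
    rw [h2, h1]
  -- conclude pointwise
  filter_upwards [hfinal] with x hx
  have hprob : IsProbabilityMeasure (ν x) := hνM.isProbabilityMeasure x
  have expand : (fun y => (ρ y - B x) * (ρ y - B x))
      = fun y => (ρ y * ρ y - (2 * B x) * ρ y) + B x * B x := by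
    ext y; ring
  have i2 : Integrable (fun y => 2 * B x * ρ y) (ν x) := (hρint x).const_mul _
  have i1 : Integrable (fun y => ρ y * ρ y - 2 * B x * ρ y) (ν x) := (hρ2int x).sub i2
  have hInt : Integrable (fun y => (ρ y - B x) * (ρ y - B x)) (ν x) := by
    rw [expand]
    exact i1.add (integrable_const _)
  have hvar : ∫ y, (ρ y - B x) * (ρ y - B x) ∂ν x = 0 := by
    rw [expand, integral_add i1 (integrable_const _),
      integral_sub (hρ2int x) i2, integral_const_mul, integral_const]
    simp only [probReal_univ, one_smul]
    have h2 : ∫ y, ρ y * ρ y ∂ν x = B2 x := rfl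
    rw [h2, hx]
    ring
  have hz := (integral_eq_zero_iff_of_nonneg (fun y => mul_self_nonneg _) hInt).mp hvar
  filter_upwards [hz] with y hy
  have hy' : (ρ y - B x) * (ρ y - B x) = 0 := hy
  have := mul_self_eq_zero.mp hy'
  have : ρ y = B x := by linarith
  exact this
end

section
/- Let (Φ_t)_{t≥0} be a family of measure-preserving bijections of 𝕋^d and define the unmixed collection 𝒩 := {D ⊆ 𝕋^d measurable : the family {1_D∘Φ_t^{-1}}_{t≥0} is precompact in L²(𝕋^d)}. Then 𝒩 is a σ-algebra: it contains the empty set, is closed under complementation, and is closed under countable unions. -/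
open MeasureTheory Filter Topology

/-- The unmixed collection `𝒩`: measurable sets `D` whose indicator trajectory
`{1_D ∘ Φ_t⁻¹}_{t ≥ 0}` is precompact in `L²(𝕋^d)`. -/
def unmixedSets {d : ℕ} (Φ : ℝ → (Torus d ≃ᵐ Torus d)) : Set (Set (Torus d)) :=
  {D | MeasurableSet D ∧
    IsCompact (closure (trajectory Φ (D.indicator (fun _ => (1 : ℝ)))))}

instance : IsProbabilityMeasure (volume : Measure (AddCircle (1 : ℝ))) :=
  ⟨by rw [AddCircle.measure_univ]; norm_num⟩

namespace Stmt6Aux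

variable {d : ℕ}

lemma ind_comp_apply (S : Set (Torus d)) (φ : Torus d ≃ᵐ Torus d) (x : Torus d) :
    (S.indicator fun _ => (1 : ℝ)) (φ.symm x)
      = ((φ.symm ⁻¹' S).indicator fun _ => (1 : ℝ)) x := by
  by_cases h : φ.symm x ∈ S <;>
    simp [Set.indicator_apply, Set.mem_preimage, h]

lemma indicator_comp (S : Set (Torus d)) (φ : Torus d ≃ᵐ Torus d) :
    (S.indicator fun _ => (1 : ℝ)) ∘ φ.symm
      = (φ.symm ⁻¹' S).indicator fun _ => (1 : ℝ) := by
  funext x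
  exact ind_comp_apply S φ x

lemma memInd {S : Set (Torus d)} (hS : MeasurableSet S) :
    MemLp (S.indicator fun _ => (1 : ℝ)) 2 (volume : Measure (Torus d)) :=
  memLp_indicator_const 2 hS 1 (Or.inr (measure_ne_top _ _))

noncomputable def indLp {S : Set (Torus d)} (hS : MeasurableSet S) :
    Lp ℝ 2 (volume : Measure (Torus d)) := (memInd hS).toLp _

lemma coeFn_indLp {S : Set (Torus d)} (hS : MeasurableSet S) :
    ⇑(indLp hS) =ᵐ[(volume : Measure (Torus d))] S.indicator fun _ => (1 : ℝ) :=
  MemLp.coeFn_toLp _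

lemma indLp_mem_traj (Φ : ℝ → (Torus d ≃ᵐ Torus d)) {D : Set (Torus d)}
    (hD : MeasurableSet D) {t : ℝ} (ht : 0 ≤ t) :
    indLp ((Φ t).symm.measurable hD) ∈ trajectory Φ (D.indicator fun _ => (1 : ℝ)) :=
  ⟨t, ht, by rw [indicator_comp]; exact coeFn_indLp _⟩

lemma ind_union_apply (A B : Set (Torus d)) (x : Torus d) :
    ((A ∪ B).indicator fun _ => (1 : ℝ)) x
      = (A.indicator fun _ => (1 : ℝ)) x ⊔ (B.indicator fun _ => (1 : ℝ)) x := by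
  by_cases hA : x ∈ A <;> by_cases hB : x ∈ B <;>
    simp [Set.indicator_apply, hA, hB]

lemma ind_diff_apply {A B : Set (Torus d)} (h : B ⊆ A) (x : Torus d) :
    (A.indicator fun _ => (1 : ℝ)) x - (B.indicator fun _ => (1 : ℝ)) x
      = ((A \ B).indicator fun _ => (1 : ℝ)) x := by
  by_cases hB : x ∈ B
  · simp [Set.indicator_apply, hB, h hB]
  · by_cases hA : x ∈ A <;> simp [Set.indicator_apply, hA, hB]

lemma ind_compl_apply (A : Set (Torus d)) (x : Torus d) :
    (1 : ℝ) - (Aᶜ.indicator fun _ => (1 : ℝ)) x = (A.indicator fun _ => (1 : ℝ)) x := by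
  by_cases hA : x ∈ A <;> simp [Set.indicator_apply, hA]

lemma eLpNorm_ind {S : Set (Torus d)} (hS : MeasurableSet S) :
    eLpNorm (S.indicator fun _ => (1 : ℝ)) 2 (volume : Measure (Torus d))
      = (volume S) ^ (1 / 2 : ℝ) := by
  rw [eLpNorm_indicator_const hS (by norm_num) (by norm_num)]
  norm_num

/-- The trajectory of a union is contained in the image of the product of trajectories
under the (continuous) lattice-sup map. -/
lemma traj_union_subset (Φ : ℝ → (Torus d ≃ᵐ Torus d)) {A B : Set (Torus d)}
    (hA : MeasurableSet A) (hB : MeasurableSet B) :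
    trajectory Φ ((A ∪ B).indicator fun _ => (1 : ℝ)) ⊆
      (fun p : (Lp ℝ 2 (volume : Measure (Torus d))) × (Lp ℝ 2 (volume : Measure (Torus d))) =>
          p.1 ⊔ p.2) ''
        ((closure (trajectory Φ (A.indicator fun _ => (1 : ℝ)))) ×ˢ
          (closure (trajectory Φ (B.indicator fun _ => (1 : ℝ))))) := by
  rintro g ⟨t, ht, hg⟩
  refine ⟨(indLp ((Φ t).symm.measurable hA), indLp ((Φ t).symm.measurable hB)),
    ⟨subset_closure (indLp_mem_traj Φ hA ht), subset_closure (indLp_mem_traj Φ hB ht)⟩, ?_⟩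
  refine (Lp.ext ?_).symm
  filter_upwards [hg, Lp.coeFn_sup (indLp ((Φ t).symm.measurable hA))
      (indLp ((Φ t).symm.measurable hB)),
    coeFn_indLp ((Φ t).symm.measurable hA), coeFn_indLp ((Φ t).symm.measurable hB)]
    with x hgx hsup ha hb
  rw [hgx, hsup]
  simp only [Pi.sup_apply]
  rw [ha, hb, Function.comp_apply, ind_comp_apply, Set.preimage_union, ind_union_apply]

/-- The trajectory of a complement is the image of the trajectory under `g ↦ 1 - g`. -/
lemma traj_compl_subset (Φ : ℝ → (Torus d ≃ᵐ Torus d)) {D : Set (Torus d)}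
    (hD : MeasurableSet D) :
    trajectory Φ (Dᶜ.indicator fun _ => (1 : ℝ)) ⊆
      (fun g => (memLp_const (1 : ℝ)).toLp _ - g) ''
        (closure (trajectory Φ (D.indicator fun _ => (1 : ℝ)))) := by
  set C : Lp ℝ 2 (volume : Measure (Torus d)) := (memLp_const (1 : ℝ)).toLp _ with hC
  rintro g ⟨t, ht, hg⟩
  refine ⟨C - g, subset_closure ⟨t, ht, ?_⟩, sub_sub_cancel _ _⟩
  filter_upwards [Lp.coeFn_sub C g, MemLp.coeFn_toLp (memLp_const (1 : ℝ)), hg]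
    with x h1 h2 h3
  rw [h1]
  simp only [Pi.sub_apply]
  rw [h2, h3, Function.comp_apply, Function.comp_apply, ind_compl_apply]

/-- Distance from a trajectory point of `U` at time `t` to the canonical trajectory point
of `V ⊆ U` at the same time. -/
lemma dist_traj (Φ : ℝ → (Torus d ≃ᵐ Torus d)) {U V : Set (Torus d)}
    (hU : MeasurableSet U) (hV : MeasurableSet V) (hVU : V ⊆ U)
    {g : Lp ℝ 2 (volume : Measure (Torus d))} {t : ℝ}
    (hΦt : MeasurePreserving (Φ t) (volume : Measure (Torus d)) volume)
    (hg : ⇑g =ᵐ[(volume : Measure (Torus d))] (U.indicator fun _ => (1 : ℝ)) ∘ (Φ t).symm) :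
    dist g (indLp ((Φ t).symm.measurable hV)) = ((volume (U \ V)) ^ (1 / 2 : ℝ)).toReal := by
  have hae : ⇑(g - indLp ((Φ t).symm.measurable hV)) =ᵐ[(volume : Measure (Torus d))]
      ((Φ t).symm ⁻¹' (U \ V)).indicator fun _ => (1 : ℝ) := by
    filter_upwards [Lp.coeFn_sub g (indLp ((Φ t).symm.measurable hV)), hg,
      coeFn_indLp ((Φ t).symm.measurable hV)] with x h1 h2 h3
    rw [h1]
    simp only [Pi.sub_apply]
    rw [h2, h3, Function.comp_apply, ind_comp_apply,
      ind_diff_apply (Set.preimage_mono hVU), ← Set.preimage_diff]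
  rw [dist_eq_norm, Lp.norm_def, eLpNorm_congr_ae hae,
    eLpNorm_ind ((Φ t).symm.measurable (hU.diff hV)),
    (hΦt.symm (Φ t)).measure_preimage (hU.diff hV).nullMeasurableSet]

end Stmt6Aux

open Stmt6Aux in
/-- For a family `(Φ t)_{t ≥ 0}` of measure-preserving bijections of
`𝕋^d`, the unmixed collection `𝒩` is a σ-algebra: it contains the empty set, is closed
under complements, and is closed under countable unions. -/
theorem stmt6 (d : ℕ) (hd : 2 ≤ d)
    (Φ : ℝ → (Torus d ≃ᵐ Torus d))
    (hΦ : ∀ t : ℝ, 0 ≤ t → MeasurePreserving (Φ t) (volume : Measure (Torus d)) volume) :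
    (∅ : Set (Torus d)) ∈ unmixedSets Φ ∧
    (∀ D : Set (Torus d), D ∈ unmixedSets Φ → Dᶜ ∈ unmixedSets Φ) ∧
    (∀ D : ℕ → Set (Torus d), (∀ n, D n ∈ unmixedSets Φ) →
      (⋃ n, D n) ∈ unmixedSets Φ) := by
  -- a convenient closure principle
  have compl_of_subset_compact :
      ∀ {S : Set (Lp ℝ 2 (volume : Measure (Torus d)))}
        {K : Set (Lp ℝ 2 (volume : Measure (Torus d)))},
        IsCompact K → S ⊆ K → IsCompact (closure S) := by
    intro S K hK hSK
    exact hK.of_isClosed_subset isClosed_closure (closure_minimal hSK hK.isClosed)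
  -- binary unions
  have binary : ∀ {A B : Set (Torus d)}, A ∈ unmixedSets Φ → B ∈ unmixedSets Φ →
      (A ∪ B) ∈ unmixedSets Φ := by
    rintro A B ⟨hAm, hAc⟩ ⟨hBm, hBc⟩
    refine ⟨hAm.union hBm, ?_⟩
    exact compl_of_subset_compact ((hAc.prod hBc).image continuous_sup)
      (traj_union_subset Φ hAm hBm)
  refine ⟨?_, ?_, ?_⟩
  · -- the empty set
    refine ⟨MeasurableSet.empty, ?_⟩
    have hsub : trajectory Φ ((∅ : Set (Torus d)).indicator fun _ => (1 : ℝ)) ⊆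
        {(0 : Lp ℝ 2 (volume : Measure (Torus d)))} := by
      rintro g ⟨t, ht, hg⟩
      have hzero : (((∅ : Set (Torus d)).indicator fun _ => (1 : ℝ)) ∘ (Φ t).symm)
          = fun _ => (0 : ℝ) := by
        funext x; simp
      rw [hzero] at hg
      refine Set.mem_singleton_iff.mpr (Lp.ext ?_)
      refine hg.trans ?_
      filter_upwards [Lp.coeFn_zero (E := ℝ) (p := 2)
        (μ := (volume : Measure (Torus d)))] with x hx
      rw [hx]; rfl
    exact compl_of_subset_compact isCompact_singleton hsub
  · -- complements
    rintro D ⟨hDm, hDc⟩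
    refine ⟨hDm.compl, ?_⟩
    exact compl_of_subset_compact
      (hDc.image (continuous_const.sub continuous_id))
      (traj_compl_subset Φ hDm)
  · -- countable unions
    intro D hD
    set U : Set (Torus d) := ⋃ n, D n with hU
    have hUm : MeasurableSet U := MeasurableSet.iUnion fun n => (hD n).1
    -- the finite partial unions
    set W : ℕ → Set (Torus d) := fun N => ⋃ n ∈ Finset.range (N + 1), D n with hWdef
    have hWm : ∀ N, MeasurableSet (W N) := fun N =>
      (Finset.range (N + 1)).measurableSet_biUnion fun n _ => (hD n).1
    have hWsucc : ∀ N, W (N + 1) = D (N + 1) ∪ W N := by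
      intro N
      simp only [hWdef]
      rw [Finset.range_add_one, Finset.set_biUnion_insert]
    have hWmem : ∀ N, W N ∈ unmixedSets Φ := by
      intro N
      induction N with
      | zero =>
        have : W 0 = D 0 := by simp [hWdef]
        rw [this]; exact hD 0
      | succ N ih =>
        rw [hWsucc]; exact binary (hD (N + 1)) ih
    have hDW : ∀ n, D n ⊆ W n := fun n =>
      Set.subset_biUnion_of_mem (Finset.self_mem_range_succ n)
    have hWU : ∀ N, W N ⊆ U := by
      intro N x hx
      obtain ⟨n, -, hn⟩ := Set.mem_iUnion₂.mp hx
      exact Set.mem_iUnion.mpr ⟨n, hn⟩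
    have hWmono : Monotone W := by
      intro N M h
      exact Set.biUnion_subset_biUnion_left (Finset.range_subset_range.mpr (by omega))
    -- the measures of the remainders tend to zero
    have htend : Tendsto (fun N => volume (U \ W N)) atTop (𝓝 0) := by
      have h0 : (⋂ N, U \ W N) = ∅ := by
        ext x
        simp only [Set.mem_iInter, Set.mem_diff, Set.mem_empty_iff_false, iff_false]
        intro h
        obtain ⟨n, hn⟩ := Set.mem_iUnion.mp (h 0).1
        exact (h n).2 (hDW n hn)
      have := tendsto_measure_iInter_atTop
        (μ := (volume : Measure (Torus d))) (s := fun N => U \ W N)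
        (fun N => (hUm.diff (hWm N)).nullMeasurableSet)
        (fun N M h => Set.diff_subset_diff_right (hWmono h))
        ⟨0, measure_ne_top _ _⟩
      rw [h0] at this
      simpa [Function.comp_def] using this
    refine ⟨hUm, ?_⟩
    -- it suffices to show total boundedness of the trajectory
    have hTB : TotallyBounded (trajectory Φ (U.indicator fun _ => (1 : ℝ))) := by
      rw [Metric.totallyBounded_iff]
      intro ε hε
      have hε2 : (0 : ℝ) < ε / 2 := by positivity
      have hex : ∃ N, volume (U \ W N) < ENNReal.ofReal ((ε / 2) ^ 2) := by
        have hpos : (0 : ENNReal) < ENNReal.ofReal ((ε / 2) ^ 2) :=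
          ENNReal.ofReal_pos.mpr (by positivity)
        exact (htend.eventually (gt_mem_nhds hpos)).exists
      obtain ⟨N, hN⟩ := hex
      have hWTB : TotallyBounded (trajectory Φ ((W N).indicator fun _ => (1 : ℝ))) :=
        ((hWmem N).2.totallyBounded).subset subset_closure
      obtain ⟨F, hFfin, hFcov⟩ := Metric.totallyBounded_iff.mp hWTB (ε / 2) hε2
      refine ⟨F, hFfin, ?_⟩
      rintro g ⟨t, ht, hg⟩
      have hdist : dist g (indLp ((Φ t).symm.measurable (hWm N))) < ε / 2 := by
        rw [dist_traj Φ hUm (hWm N) (hWU N) (hΦ t ht) hg, ← ENNReal.toReal_rpow]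
        have h1 : (volume (U \ W N)).toReal < (ε / 2) ^ 2 :=
          ENNReal.toReal_lt_of_lt_ofReal hN
        calc (volume (U \ W N)).toReal ^ (1 / 2 : ℝ)
            < ((ε / 2) ^ 2) ^ (1 / 2 : ℝ) :=
              Real.rpow_lt_rpow ENNReal.toReal_nonneg h1 (by norm_num)
          _ = ε / 2 := by
              rw [← Real.rpow_natCast (ε / 2) 2, ← Real.rpow_mul hε2.le]
              norm_num
      have hmem : indLp ((Φ t).symm.measurable (hWm N)) ∈
          trajectory Φ ((W N).indicator fun _ => (1 : ℝ)) := indLp_mem_traj Φ (hWm N) ht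
      obtain ⟨y, hy, hyball⟩ := Set.mem_iUnion₂.mp (hFcov hmem)
      refine Set.mem_iUnion₂.mpr ⟨y, hy, ?_⟩
      rw [Metric.mem_ball] at hyball ⊢
      calc dist g y ≤ dist g (indLp ((Φ t).symm.measurable (hWm N))) +
            dist (indLp ((Φ t).symm.measurable (hWm N))) y := dist_triangle _ _ _
        _ < ε / 2 + ε / 2 := add_lt_add hdist hyball
        _ = ε := by ring
    exact TotallyBounded.isCompact_of_isClosed hTB.closure isClosed_closure
end

section
/- Let (Φ_t)_{t≥0} be a family of measure-preserving bijections of 𝕋^d, let 𝒩 := {D ⊆ 𝕋^d measurable : {1_D∘Φ_t^{-1}}_{t≥0} is precompact in L²(𝕋^d)}, and let ρ : 𝕋^d → ℝ be bounded measurable. If the trajectory {ρ∘Φ_t^{-1}}_{t≥0} is precompact in L²(𝕋^d), then for every α ∈ ℝ the level set {x ∈ 𝕋^d : ρ(x) ≥ α} belongs to 𝒩; that is, ρ is measurable with respect to the σ-algebra 𝒩. -/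
open MeasureTheory Filter Topology
open scoped ENNReal NNReal

/-- If the trajectory `{ρ ∘ Φ_t⁻¹}_{t ≥ 0}` of a bounded measurable
`ρ` is precompact in `L²(𝕋^d)`, then every level set `{ρ ≥ α}` belongs to the unmixed
collection `𝒩`, i.e. `ρ` is measurable with respect to the σ-algebra `𝒩`. -/
theorem stmt7 (d : ℕ) (hd : 2 ≤ d)
    (Φ : ℝ → (Torus d ≃ᵐ Torus d))
    (hΦ : ∀ t : ℝ, 0 ≤ t → MeasurePreserving (Φ t) (volume : Measure (Torus d)) volume)
    (ρ : Torus d → ℝ) (hρm : Measurable ρ) (C : ℝ) (hρb : ∀ x, |ρ x| ≤ C)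
    (hcpt : IsCompact (closure (trajectory Φ ρ))) :
    ∀ α : ℝ, {x : Torus d | α ≤ ρ x} ∈ unmixedSets Φ := by
  intro α
  have hDmeas : MeasurableSet {x : Torus d | α ≤ ρ x} :=
    measurableSet_le measurable_const hρm
  refine ⟨hDmeas, ?_⟩
  set D : Set (Torus d) := {x | α ≤ ρ x} with hD
  set ind : Torus d → ℝ := D.indicator (fun _ => 1) with hind
  -- the original trajectory is totally bounded
  have hS : TotallyBounded (trajectory Φ ρ) :=
    hcpt.totallyBounded.subset subset_closure
  refine TotallyBounded.isCompact_of_isClosed ?_ isClosed_closure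
  refine TotallyBounded.closure ?_
  rw [Metric.totallyBounded_iff]
  intro ε hε
  -- choose δ > 0 with small measure of the transition layer
  obtain ⟨δ, hδ, hAsmall⟩ : ∃ δ : ℝ, 0 < δ ∧
      volume {x : Torus d | α - δ < ρ x ∧ ρ x < α} < ENNReal.ofReal ((ε/4)^2) := by
    set s : ℕ → Set (Torus d) := fun n => {x | α - 1/(n+1) < ρ x ∧ ρ x < α} with hs
    have hsm : ∀ n, MeasurableSet (s n) := by
      intro n
      exact (measurableSet_lt measurable_const hρm).inter
        (measurableSet_lt hρm measurable_const)
    have hanti : Antitone s := by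
      intro n m hnm x hx
      refine ⟨lt_of_le_of_lt ?_ hx.1, hx.2⟩
      have hc : ((n:ℝ)) ≤ (m:ℝ) := Nat.cast_le.mpr hnm
      have : (1 : ℝ)/(m+1) ≤ 1/(n+1) :=
        one_div_le_one_div_of_le (by positivity) (by linarith)
      linarith
    have hiInter : (⋂ n, s n) = ∅ := by
      ext x
      simp only [Set.mem_iInter, Set.mem_empty_iff_false, iff_false]
      intro h
      have hlt := (h 0).2
      obtain ⟨n, hn⟩ := exists_nat_one_div_lt (show (0:ℝ) < α - ρ x by linarith)
      exact absurd (h n).1 (by push_cast at hn ⊢; linarith)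
    have htend : Tendsto (volume ∘ s) atTop (𝓝 0) := by
      have := tendsto_measure_iInter_atTop (μ := (volume : Measure (Torus d)))
        (fun n => (hsm n).nullMeasurableSet) hanti
        ⟨0, measure_ne_top _ _⟩
      rwa [hiInter, measure_empty] at this
    have hpos : (0 : ℝ≥0∞) < ENNReal.ofReal ((ε/4)^2) := by
      rw [ENNReal.ofReal_pos]; positivity
    obtain ⟨n, hn⟩ := (htend.eventually (eventually_lt_nhds hpos)).exists
    exact ⟨1/(n+1), by positivity, hn⟩
  set β : ℝ := α - δ with hβ
  set A : Set (Torus d) := {x | β < ρ x ∧ ρ x < α} with hA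
  have hAmeas : MeasurableSet A :=
    (measurableSet_lt measurable_const hρm).inter (measurableSet_lt hρm measurable_const)
  -- the Lipschitz cutoff ψ
  set ψ : ℝ → ℝ := fun x => min 1 (max ((x - β)/δ) 0) with hψ
  have h1 : LipschitzWith (1/δ).toNNReal (fun x : ℝ => (x - β)/δ) := by
    apply LipschitzWith.of_dist_le_mul
    intro x y
    rw [Real.coe_toNNReal _ (by positivity), Real.dist_eq, Real.dist_eq]
    have h2 : (x - β)/δ - (y - β)/δ = (x - y)/δ := by ring
    rw [h2, abs_div, abs_of_pos hδ]
    rw [div_eq_mul_inv, mul_comm, one_div]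
  have lψ : LipschitzWith (1/δ).toNNReal ψ := (h1.max_const 0).const_min 1
  have hψ01 : ∀ x, 0 ≤ ψ x ∧ ψ x ≤ 1 := by
    intro x
    exact ⟨le_min zero_le_one (le_max_right _ _), min_le_left _ _⟩
  have hψcont : Continuous ψ :=
    continuous_const.min (((continuous_id.sub continuous_const).div_const δ).max
      continuous_const)
  -- shift to make it vanish at 0
  set ψ' : ℝ → ℝ := fun x => ψ x - ψ 0 with hψ'
  have lψ' : LipschitzWith (1/δ).toNNReal ψ' := by
    apply LipschitzWith.of_dist_le_mul
    intro x y
    have : dist (ψ' x) (ψ' y) = dist (ψ x) (ψ y) := by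
      rw [Real.dist_eq, Real.dist_eq]; simp only [hψ']; ring_nf
    rw [this]
    exact lψ.dist_le_mul x y
  have hψ'0 : ψ' 0 = 0 := sub_self _
  -- the Lipschitz map on L²
  set cLp : Lp ℝ 2 (volume : Measure (Torus d)) :=
    (memLp_const (ψ 0)).toLp (fun _ => ψ 0) with hcLp
  set F : Lp ℝ 2 (volume : Measure (Torus d)) → Lp ℝ 2 (volume : Measure (Torus d)) :=
    fun f => lψ'.compLp hψ'0 f + cLp with hF
  have hFlip : LipschitzWith (1/δ).toNNReal F := by
    apply LipschitzWith.of_dist_le_mul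
    intro f g
    simp only [hF]
    rw [dist_add_right]
    exact (lψ'.lipschitzWith_compLp hψ'0).dist_le_mul f g
  have hFS : TotallyBounded (F '' trajectory Φ ρ) :=
    hS.image hFlip.uniformContinuous
  obtain ⟨t, htfin, htnet⟩ := (Metric.totallyBounded_iff.mp hFS) (ε/2) (by positivity)
  refine ⟨t, htfin, ?_⟩
  intro g hg
  obtain ⟨t₀, ht₀, hgae⟩ := hg
  -- the element of the original trajectory at the same time
  have hmem : MemLp (ρ ∘ (Φ t₀).symm) 2 (volume : Measure (Torus d)) := by
    apply MemLp.of_bound ((hρm.comp (Φ t₀).symm.measurable).aestronglyMeasurable) C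
    filter_upwards with x
    exact hρb _
  set f : Lp ℝ 2 (volume : Measure (Torus d)) := hmem.toLp _ with hf
  have hfS : f ∈ trajectory Φ ρ := ⟨t₀, ht₀, hmem.coeFn_toLp⟩
  -- the key distance estimate
  have hFfae : (F f : Torus d → ℝ) =ᵐ[volume] fun x => ψ (ρ ((Φ t₀).symm x)) := by
    have h1 := Lp.coeFn_add (lψ'.compLp hψ'0 f) cLp
    have h2 := lψ'.coeFn_compLp hψ'0 f
    have h3 : (cLp : Torus d → ℝ) =ᵐ[volume] fun _ => ψ 0 := MemLp.coeFn_toLp _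
    have h4 := hmem.coeFn_toLp
    filter_upwards [h1, h2, h3, h4] with x e1 e2 e3 e4
    simp only [hF] at e1 ⊢
    rw [e1]
    simp only [Pi.add_apply, e2, e3]
    simp only [Function.comp_apply] at e4 ⊢
    rw [hf, e4]
    simp [hψ']
  have hdist : dist g (F f) ≤ ε/4 := by
    rw [Lp.dist_def]
    have hcongr : (⇑g - ⇑(F f)) =ᵐ[volume]
        (fun y => ind y - ψ (ρ y)) ∘ (Φ t₀).symm := by
      filter_upwards [hgae, hFfae] with x e1 e2
      simp [e1, e2, Function.comp]
    rw [eLpNorm_congr_ae hcongr]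
    have hmp : MeasurePreserving ((Φ t₀).symm)
        (volume : Measure (Torus d)) volume := (hΦ t₀ ht₀).symm _
    have hsm : AEStronglyMeasurable (fun y => ind y - ψ (ρ y))
        (volume : Measure (Torus d)) := by
      apply Measurable.aestronglyMeasurable
      exact ((measurable_const.indicator hDmeas).sub
        ((hψcont.measurable).comp hρm))
    rw [eLpNorm_comp_measurePreserving hsm hmp]
    -- pointwise bound by the indicator of A
    have hpt : ∀ y, ‖ind y - ψ (ρ y)‖ ≤ ‖A.indicator (fun _ => (1:ℝ)) y‖ := by
      intro y
      by_cases hy1 : α ≤ ρ y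
      · have hψ1 : ψ (ρ y) = 1 := by
          have h2 : (1:ℝ) ≤ (ρ y - β)/δ := by
            rw [le_div_iff₀ hδ]; simp only [hβ]; linarith
          exact min_eq_left (le_trans h2 (le_max_left _ _))
        have hind1 : ind y = 1 := Set.indicator_of_mem (show y ∈ D from hy1) _
        rw [hind1, hψ1, sub_self, norm_zero]
        exact norm_nonneg _
      · have hind0 : ind y = 0 := Set.indicator_of_notMem (show y ∉ D from hy1) _
        by_cases hy2 : ρ y ≤ β
        · have hψ0 : ψ (ρ y) = 0 := by
            have h2 : (ρ y - β)/δ ≤ 0 := div_nonpos_of_nonpos_of_nonneg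
              (by linarith) hδ.le
            simp only [hψ]
            rw [max_eq_right h2, min_eq_right zero_le_one]
          rw [hind0, hψ0, sub_self, norm_zero]
          exact norm_nonneg _
        · have hyA : y ∈ A := ⟨lt_of_not_ge hy2, lt_of_not_ge hy1⟩
          rw [hind0, Set.indicator_of_mem hyA, zero_sub, norm_neg]
          rw [Real.norm_eq_abs, Real.norm_eq_abs, abs_one]
          rw [abs_le]
          exact ⟨by linarith [(hψ01 (ρ y)).1], (hψ01 (ρ y)).2⟩
    have hle := eLpNorm_mono hpt (p := 2) (μ := (volume : Measure (Torus d)))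
    have hindnorm : eLpNorm (A.indicator (fun _ => (1:ℝ))) 2
        (volume : Measure (Torus d)) ≤ ENNReal.ofReal (ε/4) := by
      rw [eLpNorm_indicator_const hAmeas two_ne_zero ENNReal.ofNat_ne_top]
      simp only [nnnorm_one, enorm_one, ENNReal.coe_one, one_mul, ENNReal.toReal_ofNat]
      have hA2 : volume A ≤ ENNReal.ofReal (ε/4) ^ (2:ℝ) := by
        rw [ENNReal.ofReal_rpow_of_nonneg (by positivity) (by norm_num)]
        rw [show ((ε/4 : ℝ) ^ (2:ℝ)) = (ε/4)^2 from by
          rw [show (2:ℝ) = ((2:ℕ):ℝ) from by norm_num, Real.rpow_natCast]]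
        exact hAsmall.le
      calc volume A ^ (1/(2:ℝ)) ≤ (ENNReal.ofReal (ε/4) ^ (2:ℝ)) ^ (1/(2:ℝ)) :=
            ENNReal.rpow_le_rpow hA2 (by norm_num)
        _ = ENNReal.ofReal (ε/4) := by
            rw [← ENNReal.rpow_mul]; norm_num
    refine ENNReal.toReal_le_of_le_ofReal (by positivity) (le_trans hle hindnorm)
  -- combine with the ε/2-net
  have hFfmem : F f ∈ F '' trajectory Φ ρ := Set.mem_image_of_mem F hfS
  obtain ⟨y, hyt, hyb⟩ := Set.mem_iUnion₂.mp (htnet hFfmem)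
  refine Set.mem_iUnion₂.mpr ⟨y, hyt, ?_⟩
  rw [Metric.mem_ball] at hyb ⊢
  calc dist g y ≤ dist g (F f) + dist (F f) y := dist_triangle _ _ _
    _ < ε/4 + ε/2 := by exact add_lt_add_of_le_of_lt hdist hyb
    _ < ε := by linarith
end

section
/- Let (Φ_t)_{t≥0} be a family of measure-preserving bijections of 𝕋^d, let 𝒩 := {D ⊆ 𝕋^d measurable : {1_D∘Φ_t^{-1}}_{t≥0} is precompact in L²(𝕋^d)}, and let ρ : 𝕋^d → ℝ be bounded measurable. If for every α ∈ ℝ the level set {x ∈ 𝕋^d : ρ(x) ≥ α} belongs to 𝒩 (i.e. ρ is 𝒩-measurable), then the trajectory {ρ∘Φ_t^{-1}}_{t≥0} is precompact in L²(𝕋^d). -/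
open MeasureTheory Filter Topology

lemma coeFn_finset_sum {α E : Type*} [MeasurableSpace α] {μ : Measure α}
    [NormedAddCommGroup E] {p : ENNReal} {ι : Type*} (s : Finset ι) (f : ι → Lp E p μ) :
    (↑↑(∑ i ∈ s, f i) : α → E) =ᵐ[μ] fun x => ∑ i ∈ s, f i x := by
  classical
  induction s using Finset.cons_induction with
  | empty => simp only [Finset.sum_empty]; exact Lp.coeFn_zero E p μ
  | cons a s ha ih =>
    rw [Finset.sum_cons]
    filter_upwards [Lp.coeFn_add (f a) (∑ i ∈ s, f i), ih] with x h1 h2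
    rw [h1, Pi.add_apply, h2, Finset.sum_cons]

lemma approx_key (B : ℝ) (hB : 0 < B) (N : ℕ) (hN : 0 < N) (v : ℝ) (hv : |v| ≤ B) :
    |v - (-B + ∑ k : Fin N,
      (if -B + ((k : ℕ) + 1) * (2 * B / N) ≤ v then (2 * B / N) else 0))| ≤ 2 * B / N := by
  have hNR : (0:ℝ) < N := Nat.cast_pos.mpr hN
  set h : ℝ := 2 * B / N with hh
  have hh0 : 0 < h := by positivity
  set r : ℝ := (v + B) / h with hr
  have hvB := abs_le.mp hv
  have hr0 : 0 ≤ r := div_nonneg (by linarith) hh0.le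
  have hvr : v + B = r * h := (div_mul_cancel₀ _ hh0.ne').symm
  have hrN : r ≤ N := by
    rw [hr, div_le_iff₀ hh0, hh]
    field_simp
    linarith
  set m := ⌊r⌋₊ with hm
  have hmN : m ≤ N := by
    have := Nat.floor_le_floor hrN
    simpa using this
  have hcond : ∀ i : ℕ, (-B + ((i:ℝ) + 1) * h ≤ v) ↔ i < m := by
    intro i
    rw [Nat.lt_iff_add_one_le, hm, Nat.le_floor_iff hr0]
    constructor
    · intro hle
      have : ((i:ℝ) + 1) * h ≤ r * h := by linarith
      have := le_of_mul_le_mul_right this hh0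
      push_cast
      linarith
    · intro hle
      have : ((i:ℝ) + 1) ≤ r := by push_cast at hle ⊢; linarith
      nlinarith
  have hsum : (∑ k : Fin N, (if -B + ((k : ℕ) + 1) * h ≤ v then h else 0)) = m * h := by
    rw [Fin.sum_univ_eq_sum_range (fun i => if -B + ((i:ℝ) + 1) * h ≤ v then h else 0) N]
    have : ∀ i ∈ Finset.range N,
        (if -B + ((i:ℝ) + 1) * h ≤ v then h else 0) = (if i ∈ Finset.range m then h else 0) := by
      intro i _
      simp only [Finset.mem_range]
      exact if_congr (hcond i) rfl rfl
    rw [Finset.sum_congr rfl this, Finset.sum_ite_mem]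
    have : Finset.range N ∩ Finset.range m = Finset.range m := by
      ext i; simp only [Finset.mem_inter, Finset.mem_range]; omega
    rw [this, Finset.sum_const, Finset.card_range, nsmul_eq_mul]
  rw [hsum]
  have h1 : (m:ℝ) ≤ r := Nat.floor_le hr0
  have h2 : r < m + 1 := Nat.lt_floor_add_one r
  rw [abs_le]
  constructor <;> nlinarith

/-- If every level set `{ρ ≥ α}` of a bounded measurable `ρ` belongs
to the unmixed collection `𝒩` (i.e. `ρ` is `𝒩`-measurable), then the trajectory
`{ρ ∘ Φ_t⁻¹}_{t ≥ 0}` is precompact in `L²(𝕋^d)`. -/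
theorem stmt8 (d : ℕ) (hd : 2 ≤ d)
    (Φ : ℝ → (Torus d ≃ᵐ Torus d))
    (hΦ : ∀ t : ℝ, 0 ≤ t → MeasurePreserving (Φ t) (volume : Measure (Torus d)) volume)
    (ρ : Torus d → ℝ) (hρm : Measurable ρ) (C : ℝ) (hρb : ∀ x, |ρ x| ≤ C)
    (hlev : ∀ α : ℝ, {x : Torus d | α ≤ ρ x} ∈ unmixedSets Φ) :
    IsCompact (closure (trajectory Φ ρ)) := by
  classical
  have hprob : IsProbabilityMeasure (volume : Measure (Torus d)) := by
    have : IsProbabilityMeasure (volume : Measure (AddCircle (1:ℝ))) :=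
      ⟨by rw [AddCircle.measure_univ]; norm_num⟩
    infer_instance
  set B : ℝ := |C| + 1 with hBdef
  have hB0 : 0 < B := by positivity
  have hρB : ∀ x, |ρ x| ≤ B := fun x => (hρb x).trans (by
    have := le_abs_self C; simp only [hBdef]; linarith)
  refine TotallyBounded.isCompact_of_isClosed (TotallyBounded.closure ?_) isClosed_closure
  rw [Metric.totallyBounded_iff]
  intro ε hε
  obtain ⟨N, hNgt⟩ := exists_nat_gt (max 1 (6 * B / ε))
  have hN0 : 0 < N := by
    have h1 : (1:ℝ) < N := lt_of_le_of_lt (le_max_left _ _) hNgt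
    have h2 : (0:ℝ) < N := by linarith
    exact_mod_cast h2
  have hNR : (0:ℝ) < N := Nat.cast_pos.mpr hN0
  set h : ℝ := 2 * B / N with hhdef
  have hh0 : 0 < h := by positivity
  have hhε : h ≤ ε / 3 := by
    have h6 : 6 * B / ε < N := lt_of_le_of_lt (le_max_right _ _) hNgt
    rw [div_lt_iff₀ hε] at h6
    rw [hhdef, div_le_iff₀ hNR]
    nlinarith
  set D : Fin N → Set (Torus d) := fun k => {x | -B + ((k:ℕ) + 1) * h ≤ ρ x} with hD
  have hDU : ∀ k, D k ∈ unmixedSets Φ := fun k => hlev _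
  have hmc : MemLp (fun _ : Torus d => -B) 2 (volume : Measure (Torus d)) := memLp_const _
  set cB : Lp ℝ 2 (volume : Measure (Torus d)) := hmc.toLp _ with hcB
  set F : (Fin N → Lp ℝ 2 (volume : Measure (Torus d))) → Lp ℝ 2 (volume : Measure (Torus d)) :=
    fun g => cB + ∑ k, h • g k with hF
  have hFc : Continuous F := by
    apply Continuous.add continuous_const
    exact continuous_finset_sum _ fun k _ => (continuous_apply k).const_smul h
  set K := F '' Set.pi Set.univ
    (fun k => closure (trajectory Φ ((D k).indicator fun _ => (1:ℝ)))) with hKdef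
  have hK : IsCompact K := (isCompact_univ_pi fun k => (hDU k).2).image hFc
  obtain ⟨t, htfin, htcov⟩ := Metric.totallyBounded_iff.mp hK.totallyBounded (ε/3) (by linarith)
  refine ⟨t, htfin, ?_⟩
  rintro g ⟨t0, ht0, hg⟩
  have hmem : ∀ k : Fin N,
      MemLp (((D k).indicator fun _ => (1:ℝ)) ∘ (Φ t0).symm) 2 (volume : Measure (Torus d)) := by
    intro k
    refine MemLp.of_bound ?_ 1 ?_
    · exact ((measurable_const.indicator ((hDU k).1)).comp
        (Φ t0).symm.measurable).aestronglyMeasurable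
    · filter_upwards with x
      by_cases hx : (Φ t0).symm x ∈ D k <;> simp [Function.comp, Set.indicator, hx]
  set gvec : Fin N → Lp ℝ 2 (volume : Measure (Torus d)) := fun k => (hmem k).toLp _ with hgvec
  have hgvK : F gvec ∈ K := by
    refine ⟨gvec, fun k _ => subset_closure ⟨t0, ht0, (hmem k).coeFn_toLp⟩, rfl⟩
  have hFrep : (↑↑(F gvec) : Torus d → ℝ) =ᵐ[volume]
      fun x => -B + ∑ k : Fin N, h * ((D k).indicator (fun _ => (1:ℝ)) ((Φ t0).symm x)) := by
    have hk : ∀ᵐ x ∂(volume : Measure (Torus d)), ∀ k : Fin N,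
        (↑↑(h • gvec k) : Torus d → ℝ) x
          = h * ((D k).indicator (fun _ => (1:ℝ)) ((Φ t0).symm x)) := by
      rw [ae_all_iff]
      intro k
      filter_upwards [Lp.coeFn_smul h (gvec k), (hmem k).coeFn_toLp] with x h1 h2
      rw [h1, Pi.smul_apply, smul_eq_mul]; exact congrArg (h * ·) h2
    filter_upwards [Lp.coeFn_add cB (∑ k, h • gvec k), hmc.coeFn_toLp,
      coeFn_finset_sum Finset.univ (fun k => h • gvec k), hk] with x h1 h2 h3 h4
    simp only [hF] at h1 ⊢
    rw [h1, Pi.add_apply, h2, h3]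
    congr 1
    exact Finset.sum_congr rfl fun k _ => h4 k
  have hdist : dist g (F gvec) ≤ h := by
    rw [dist_eq_norm]
    have hbound : ∀ᵐ x ∂(volume : Measure (Torus d)), ‖(↑↑(g - F gvec) : Torus d → ℝ) x‖ ≤ h := by
      filter_upwards [Lp.coeFn_sub g (F gvec), hg, hFrep] with x h1 h2 h3
      rw [h1, Pi.sub_apply, h2, h3]
      have hsum_eq : (∑ k : Fin N, h * ((D k).indicator (fun _ => (1:ℝ)) ((Φ t0).symm x)))
          = ∑ k : Fin N, (if -B + (((k:ℕ):ℝ) + 1) * h ≤ ρ ((Φ t0).symm x) then h else 0) := by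
        refine Finset.sum_congr rfl fun k _ => ?_
        by_cases hx : (Φ t0).symm x ∈ D k
        · simp [Set.indicator_of_mem hx,
            show -B + (((k:ℕ):ℝ) + 1) * h ≤ ρ ((Φ t0).symm x) from hx]
        · simp [Set.indicator_of_notMem hx,
            show ¬(-B + (((k:ℕ):ℝ) + 1) * h ≤ ρ ((Φ t0).symm x)) from hx]
      rw [Real.norm_eq_abs, hsum_eq]
      have key := approx_key B hB0 N hN0 (ρ ((Φ t0).symm x)) (hρB _)
      rw [← hhdef] at key
      exact key
    have := Lp.norm_le_of_ae_bound (f := g - F gvec) hh0.le hbound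
    simpa [measureUnivNNReal, measure_univ] using this
  obtain ⟨y, hyt, hy⟩ := Set.mem_iUnion₂.mp (htcov hgvK)
  refine Set.mem_iUnion₂.mpr ⟨y, hyt, ?_⟩
  rw [Metric.mem_ball] at hy ⊢
  calc dist g y ≤ dist g (F gvec) + dist (F gvec) y := dist_triangle _ _ _
    _ < ε/3 + ε/3 := by exact add_lt_add_of_le_of_lt (hdist.trans hhε) hy
    _ < ε := by linarith
end

section
/- Let (Φ_k)_{k∈ℕ} and Φ be measure-preserving bijections of 𝕋^d. If μ(Φ_k(D) △ Φ(D)) → 0 as k → ∞ for every measurable set D ⊆ 𝕋^d, then Φ_k converges to Φ in measure: for every δ > 0, μ({x ∈ 𝕋^d : dist(Φ_k(x), Φ(x)) > δ}) → 0 as k → ∞, where dist denotes the quotient metric on 𝕋^d. -/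
open MeasureTheory Filter Topology
open scoped symmDiff

/-- Let `(Φ k)` and `Φ` be measure-preserving bijections of `𝕋^d`.
If `μ(Φ_k(D) ∆ Φ(D)) → 0` for every measurable set `D`, then `Φ_k → Φ` in measure:
for every `δ > 0`, `μ({x : dist(Φ_k(x), Φ(x)) > δ}) → 0`. -/
theorem stmt13 (d : ℕ) (hd : 2 ≤ d)
    (Φk : ℕ → (Torus d ≃ᵐ Torus d)) (Φ : Torus d ≃ᵐ Torus d)
    (hΦk : ∀ k, MeasurePreserving (Φk k) (volume : Measure (Torus d)) volume)
    (hΦ : MeasurePreserving Φ (volume : Measure (Torus d)) volume)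
    (hsd : ∀ D : Set (Torus d), MeasurableSet D →
      Tendsto (fun k => volume ((Φk k '' D) ∆ (Φ '' D))) atTop (𝓝 0)) :
    ∀ δ : ℝ, 0 < δ →
      Tendsto (fun k => volume {x : Torus d | δ < dist (Φk k x) (Φ x)}) atTop (𝓝 0) := by
  intro δ hδ
  obtain ⟨t, ht⟩ := isCompact_univ.elim_finite_subcover
    (fun i : Torus d => Metric.ball i (δ/2)) (fun i => Metric.isOpen_ball)
    (fun x _ => Set.mem_iUnion.2 ⟨x, Metric.mem_ball_self (by linarith)⟩)
  set D : Torus d → Set (Torus d) := fun i => Φ ⁻¹' Metric.ball i (δ/2) with hDdef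
  have hDmeas : ∀ i, MeasurableSet (D i) := fun i =>
    Φ.measurable measurableSet_ball
  have hΦD : ∀ i, Φ '' D i = Metric.ball i (δ/2) := fun i =>
    Set.image_preimage_eq _ Φ.surjective
  have key : ∀ k, volume {x : Torus d | δ < dist (Φk k x) (Φ x)} ≤
      ∑ i ∈ t, volume ((Φk k '' D i) ∆ (Φ '' D i)) := by
    intro k
    have hsub : {x : Torus d | δ < dist (Φk k x) (Φ x)} ⊆
        ⋃ i ∈ t, (D i \ (Φk k) ⁻¹' Metric.ball i (δ/2)) := by
      intro x hx
      obtain ⟨i, hit, hxi⟩ := Set.mem_iUnion₂.1 (ht (Set.mem_univ (Φ x)))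
      refine Set.mem_iUnion₂.2 ⟨i, hit, hxi, fun hk => ?_⟩
      have hlt : dist (Φk k x) (Φ x) < δ := by
        calc dist (Φk k x) (Φ x) ≤ dist (Φk k x) i + dist i (Φ x) := dist_triangle _ _ _
          _ < δ/2 + δ/2 := add_lt_add hk (by rw [dist_comm]; exact hxi)
          _ = δ := by ring
      exact absurd hx (by simpa using hlt.not_gt)
    refine le_trans (measure_mono hsub) (le_trans (measure_biUnion_finset_le t _) ?_)
    refine Finset.sum_le_sum fun i _ => ?_
    have hmeas : MeasurableSet (D i \ (Φk k) ⁻¹' Metric.ball i (δ/2)) :=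
      (hDmeas i).diff ((Φk k).measurable measurableSet_ball)
    have himg : volume (D i \ (Φk k) ⁻¹' Metric.ball i (δ/2)) =
        volume (Φk k '' (D i \ (Φk k) ⁻¹' Metric.ball i (δ/2))) := by
      rw [MeasurableEquiv.image_eq_preimage_symm]
      exact (((hΦk k).symm (Φk k)).measure_preimage hmeas.nullMeasurableSet).symm
    rw [himg]
    refine measure_mono ?_
    rw [Set.image_diff (Φk k).injective, Set.image_preimage_eq _ (Φk k).surjective,
      ← hΦD i]
    exact fun y hy => Or.inl hy
  have hsum : Tendsto (fun k => ∑ i ∈ t, volume ((Φk k '' D i) ∆ (Φ '' D i))) atTop (𝓝 0) := by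
    have := tendsto_finset_sum t (fun i _ => hsd (D i) (hDmeas i))
    simpa using this
  exact tendsto_of_tendsto_of_tendsto_of_le_of_le tendsto_const_nhds hsum
    (fun k => zero_le) key
end

section
/- Let Ψ be a measure-preserving bijection of 𝕋^d, let x₀ ∈ 𝕋^d, let 0 < r < 1/4, and let 0 < ε < r/2. If μ({x ∈ 𝕋^d : dist(Ψ(x), x) > ε}) < ε, then μ(B_r(x₀) △ Ψ(B_r(x₀))) ≤ 2·(μ(B_r(x₀) \ B_{r−ε}(x₀)) + ε). -/
open MeasureTheory Filter Topology Metric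
open scoped symmDiff ENNReal

/-- Let `Ψ` be a measure-preserving bijection of `𝕋^d`, `x₀ ∈ 𝕋^d`,
`0 < r < 1/4` and `0 < ε < r/2`. If `μ({x : dist(Ψ(x), x) > ε}) < ε`, then
`μ(B_r(x₀) ∆ Ψ(B_r(x₀))) ≤ 2 (μ(B_r(x₀) \ B_{r-ε}(x₀)) + ε)`. -/
theorem stmt15 (d : ℕ) (hd : 2 ≤ d)
    (Ψ : Torus d ≃ᵐ Torus d)
    (hΨ : MeasurePreserving Ψ (volume : Measure (Torus d)) volume)
    (x₀ : Torus d) (r ε : ℝ) (hr0 : 0 < r) (hr : r < 1/4) (hε0 : 0 < ε) (hε : ε < r/2)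
    (hsmall : volume {x : Torus d | ε < dist (Ψ x) x} < ENNReal.ofReal ε) :
    volume ((ball x₀ r) ∆ (Ψ '' ball x₀ r)) ≤
      2 * (volume (ball x₀ r \ ball x₀ (r - ε)) + ENNReal.ofReal ε) := by
  set A := ball x₀ r with hA
  set A' := ball x₀ (r - ε) with hA'
  set E := {x : Torus d | ε < dist (Ψ x) x} with hE
  have hEmeas : MeasurableSet E :=
    measurableSet_lt measurable_const (Ψ.measurable.dist measurable_id)
  -- image under Ψ is preimage under Ψ.symm
  have himg : ∀ S : Set (Torus d), Ψ '' S = Ψ.symm ⁻¹' S := by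
    intro S
    ext z
    simp [MeasurableEquiv.image_eq_preimage_symm]
  have hmeasimg : ∀ S : Set (Torus d), MeasurableSet S → volume (Ψ '' S) = volume S := by
    intro S hS
    rw [himg S]
    exact (MeasurePreserving.symm Ψ hΨ).measure_preimage hS.nullMeasurableSet
  -- key inclusion 1
  have h1 : Ψ '' A \ A ⊆ Ψ '' ((A \ A') ∪ E) := by
    rintro z ⟨⟨x, hxA, rfl⟩, hzA⟩
    refine ⟨x, ?_, rfl⟩
    by_cases hxE : x ∈ E
    · exact Or.inr hxE
    · left
      refine ⟨hxA, fun hxA' => hzA ?_⟩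
      have hd1 : dist (Ψ x) x ≤ ε := le_of_not_gt hxE
      have : dist (Ψ x) x₀ ≤ dist (Ψ x) x + dist x x₀ := dist_triangle _ _ _
      have hx' : dist x x₀ < r - ε := mem_ball.mp hxA'
      exact mem_ball.mpr (by linarith)
  -- key inclusion 2
  have h2 : A \ Ψ '' A ⊆ (A \ A') ∪ Ψ '' E := by
    rintro z ⟨hzA, hz⟩
    by_cases hy : Ψ.symm z ∈ E
    · exact Or.inr ⟨Ψ.symm z, hy, Ψ.apply_symm_apply z⟩
    · left
      refine ⟨hzA, fun hzA' => hz ?_⟩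
      have hd1 : dist (Ψ (Ψ.symm z)) (Ψ.symm z) ≤ ε := le_of_not_gt hy
      rw [Ψ.apply_symm_apply] at hd1
      have : dist (Ψ.symm z) x₀ ≤ dist (Ψ.symm z) z + dist z x₀ := dist_triangle _ _ _
      have hz' : dist z x₀ < r - ε := mem_ball.mp hzA'
      have hyA : Ψ.symm z ∈ A := mem_ball.mpr (by linarith [dist_comm z (Ψ.symm z) ▸ hd1])
      exact ⟨Ψ.symm z, hyA, Ψ.apply_symm_apply z⟩
  have hAmeas : MeasurableSet (A \ A') := measurableSet_ball.diff measurableSet_ball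
  have hb1 : volume (Ψ '' A \ A) ≤ volume (A \ A') + ENNReal.ofReal ε := by
    calc volume (Ψ '' A \ A) ≤ volume (Ψ '' ((A \ A') ∪ E)) := measure_mono h1
      _ = volume ((A \ A') ∪ E) := hmeasimg _ (hAmeas.union hEmeas)
      _ ≤ volume (A \ A') + volume E := measure_union_le _ _
      _ ≤ volume (A \ A') + ENNReal.ofReal ε := by gcongr
  have hb2 : volume (A \ Ψ '' A) ≤ volume (A \ A') + ENNReal.ofReal ε := by
    calc volume (A \ Ψ '' A) ≤ volume ((A \ A') ∪ Ψ '' E) := measure_mono h2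
      _ ≤ volume (A \ A') + volume (Ψ '' E) := measure_union_le _ _
      _ ≤ volume (A \ A') + ENNReal.ofReal ε := by
          rw [hmeasimg _ hEmeas]; gcongr
  calc volume (A ∆ (Ψ '' A)) ≤ volume (A \ Ψ '' A) + volume (Ψ '' A \ A) := by
        rw [Set.symmDiff_def]; exact measure_union_le _ _
    _ ≤ (volume (A \ A') + ENNReal.ofReal ε) + (volume (A \ A') + ENNReal.ofReal ε) :=
        add_le_add hb2 hb1
    _ = 2 * (volume (A \ A') + ENNReal.ofReal ε) := by ring
end
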